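/- For every τ in the upper half-plane ℍ, η(2τ)⁹ / (η(τ)³ · η(4τ)³) = ∑_{n=0}^∞ (-2/n) · n · exp(2πi n² τ / 8), where (-2/n) is the Kronecker symbol. -/

import Mathlib

open Complex

/-- The Dedekind eta function `η(τ) = q^{1/24} ∏ (1 - q^n)`, `q = exp(2πiτ)`. -/
noncomputable def dedekindEta (τ : ℂ) : ℂ :=
  Complex.exp (2 * Real.pi * I * τ / 24) *
    ∏' n : ℕ, (1 - Complex.exp (2 * Real.pi * I * τ) ^ (n + 1))

/-- The Kronecker symbol `(-2/n)`. -/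
def kronNegTwo (n : ℕ) : ℤ :=
  if n % 8 = 1 ∨ n % 8 = 3 then 1
  else if n % 8 = 5 ∨ n % 8 = 7 then -1
  else 0

/-!
Write `q = e^{2πiτ}` and `φ(x) = ∏ (1 - x^{n+1})`, so that `η(τ) = q^{1/24} φ(q)` and the left-hand
side is `q^{1/8} (φ(q²)³ / (φ(q) φ(q⁴)))³`. Splitting the factors of `φ(-q)` and of
`∏ (1 + q^{n+1}) = φ(q²) / φ(q)` by parity gives `φ(q²)³ = φ(q) φ(q⁴) φ(-q)`. Jacobi's identity
`φ(x)³ = ∑ (-1)^n (2n+1) x^{n(n+1)/2}` at `x = -q` turns `q^{1/8} φ(-q)³` into the theta series,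
since `(2n+1)² = 8 · n(n+1)/2 + 1` and `(-2/(2n+1)) = (-1)^{n + n(n+1)/2}`.

Jacobi's identity comes from the finite triple product
`∏_{i ≤ N} (1 - x^{i+1} z)(z - x^i) = ∑_k c_k z^k`, a consequence of the `q`-binomial theorem.
The factor `z - 1` on the left lets one read off `(x;x)_{N+1} (x;x)_N = ∑_k k c_k` (the derivative
at `z = 1`); pairing `k` with its mirror image about `N + 1` and letting `N → ∞` by dominated
convergence, each Gaussian binomial in `c_k` tends to `1 / φ(x)`.
-/

open Finset Filter Topology

lemma Nat.choose_two_succ (n : ℕ) : (n + 1).choose 2 = n.choose 2 + n := by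
  simp [Nat.choose_succ_succ, add_comm]

lemma Nat.le_choose_two_succ (n : ℕ) : n ≤ (n + 1).choose 2 := by
  simp [Nat.choose_two_succ]

lemma summable_succ_mul_pow {r : ℝ} (hr₀ : 0 ≤ r) (hr : r < 1) :
    Summable fun n : ℕ => ((n : ℝ) + 1) * r ^ n := by
  have hr' : ‖r‖ < 1 := by rwa [Real.norm_of_nonneg hr₀]
  simpa [add_mul] using (summable_pow_mul_geometric_of_norm_lt_one 1 hr').add
    (summable_geometric_of_lt_one hr₀ hr)

section
variable {x : ℂ}

lemma one_sub_pow_ne_zero (hx : ‖x‖ < 1) {n : ℕ} (hn : n ≠ 0) : 1 - x ^ n ≠ 0 := by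
  refine sub_ne_zero.2 fun h => ?_
  have : ‖x ^ n‖ < 1 := by rw [norm_pow]; exact pow_lt_one₀ (norm_nonneg x) hx hn
  simp [← h] at this

lemma summable_pow_of_le (hx : ‖x‖ < 1) {e : ℕ → ℕ} (he : ∀ n, n ≤ e n) :
    Summable fun n => x ^ e n := by
  refine .of_norm_bounded (summable_geometric_of_lt_one (norm_nonneg x) hx) fun n => ?_
  rw [norm_pow]
  exact pow_le_pow_of_le_one (norm_nonneg _) hx.le (he n)

lemma multipliable_one_add_pow_of_le (hx : ‖x‖ < 1) {e : ℕ → ℕ} (he : ∀ n, n ≤ e n) :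
    Multipliable fun n => 1 + x ^ e n :=
  Complex.multipliable_one_add_of_summable (summable_pow_of_le hx he)

lemma multipliable_one_sub_pow_of_le (hx : ‖x‖ < 1) {e : ℕ → ℕ} (he : ∀ n, n ≤ e n) :
    Multipliable fun n => 1 - x ^ e n := by
  simpa [sub_eq_add_neg] using
    Complex.multipliable_one_add_of_summable (summable_pow_of_le hx he).neg

end

noncomputable def eulerPhi (x : ℂ) : ℂ := ∏' n : ℕ, (1 - x ^ (n + 1))

section
variable {x : ℂ}

lemma eulerPhi_ne_zero (hx : ‖x‖ < 1) : eulerPhi x ≠ 0 := by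
  simpa [eulerPhi, sub_eq_add_neg] using tprod_one_add_ne_zero_of_summable
    (f := fun n => -x ^ (n + 1))
    (fun n => by simpa [sub_eq_add_neg] using one_sub_pow_ne_zero hx n.succ_ne_zero)
    (by simpa using (summable_pow_of_le hx (e := (· + 1)) (by simp)).norm)

lemma tprod_one_sub_mul_tprod_one_add {ι : Type*} {f : ι → ℂ}
    (h₁ : Multipliable fun i => 1 - f i) (h₂ : Multipliable fun i => 1 + f i) :
    (∏' i, (1 - f i)) * ∏' i, (1 + f i) = ∏' i, (1 - f i ^ 2) := by
  rw [← h₁.tprod_mul h₂]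
  exact tprod_congr fun i => by ring

lemma eulerPhi_mul_tprod_one_add (hx : ‖x‖ < 1) :
    eulerPhi x * ∏' n : ℕ, (1 + x ^ (n + 1)) = eulerPhi (x ^ 2) := by
  rw [eulerPhi, tprod_one_sub_mul_tprod_one_add (multipliable_one_sub_pow_of_le hx (by simp))
    (multipliable_one_add_pow_of_le hx (by simp)), eulerPhi]
  simp only [← pow_mul, mul_comm]

theorem eulerPhi_sq_pow_three (hx : ‖x‖ < 1) :
    eulerPhi (x ^ 2) ^ 3 = eulerPhi x * eulerPhi (x ^ 4) * eulerPhi (-x) := by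
  have hx2 : ‖x ^ 2‖ < 1 := by rw [norm_pow]; exact pow_lt_one₀ (norm_nonneg x) hx two_ne_zero
  have hodd : Multipliable fun k : ℕ => 1 + x ^ (2 * k + 1) :=
    multipliable_one_add_pow_of_le hx (by omega)
  have hsq : ∀ k : ℕ, x ^ (2 * k + 2) = (x ^ 2) ^ (k + 1) := fun k => by rw [← pow_mul]; ring_nf
  have hsplit_add : ∏' n : ℕ, (1 + x ^ (n + 1)) =
      (∏' k : ℕ, (1 + x ^ (2 * k + 1))) * ∏' k : ℕ, (1 + (x ^ 2) ^ (k + 1)) := by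
    rw [← tprod_even_mul_odd (f := fun n => 1 + x ^ (n + 1)) hodd]
    · simp only [hsq]
    · simpa only [hsq] using multipliable_one_add_pow_of_le hx2 (e := (· + 1)) (by simp)
  have hsplit_neg : eulerPhi (-x) = (∏' k : ℕ, (1 + x ^ (2 * k + 1))) * eulerPhi (x ^ 2) := by
    have he : ∀ k : ℕ, 1 - (-x) ^ (2 * k + 1) = 1 + x ^ (2 * k + 1) := fun k => by
      rw [Odd.neg_pow ⟨k, rfl⟩]; ring
    have ho : ∀ k : ℕ, 1 - (-x) ^ (2 * k + 1 + 1) = 1 - (x ^ 2) ^ (k + 1) := fun k => by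
      rw [Even.neg_pow ⟨k + 1, by ring⟩, ← hsq]
    rw [eulerPhi, ← tprod_even_mul_odd (f := fun n => 1 - (-x) ^ (n + 1))]
    · simp only [he, ho, eulerPhi]
    · simpa [he] using hodd
    · simpa [ho] using multipliable_one_sub_pow_of_le hx2 (e := (· + 1)) (by simp)
  rw [show x ^ 4 = (x ^ 2) ^ 2 by ring, ← eulerPhi_mul_tprod_one_add hx2, hsplit_neg,
    ← eulerPhi_mul_tprod_one_add hx, hsplit_add]
  ring

end

noncomputable def qPochhammer (x : ℂ) (n : ℕ) : ℂ := ∏ i ∈ range n, (1 - x ^ (i + 1))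

noncomputable def qBinomial (x : ℂ) (m k : ℕ) : ℂ :=
  if k ≤ m then qPochhammer x m / (qPochhammer x k * qPochhammer x (m - k)) else 0

section
variable {x : ℂ}

lemma qPochhammer_succ (n : ℕ) : qPochhammer x (n + 1) = qPochhammer x n * (1 - x ^ (n + 1)) :=
  prod_range_succ _ _

@[simp]
lemma qPochhammer_zero : qPochhammer x 0 = 1 := prod_range_zero _

lemma qPochhammer_ne_zero (hx : ‖x‖ < 1) (n : ℕ) : qPochhammer x n ≠ 0 :=
  prod_ne_zero_iff.2 fun i _ => one_sub_pow_ne_zero hx i.succ_ne_zero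

lemma qBinomial_add (k l : ℕ) :
    qBinomial x (k + l) k = qPochhammer x (k + l) / (qPochhammer x k * qPochhammer x l) := by
  simp [qBinomial]

lemma qBinomial_zero_right (hx : ‖x‖ < 1) (m : ℕ) : qBinomial x m 0 = 1 := by
  simp [qBinomial, qPochhammer_ne_zero hx]

lemma qBinomial_self (hx : ‖x‖ < 1) (m : ℕ) : qBinomial x m m = 1 := by
  simp [qBinomial, qPochhammer_ne_zero hx]

lemma qBinomial_of_lt {m k : ℕ} (h : m < k) : qBinomial x m k = 0 := by
  simp [qBinomial, h.not_ge]

lemma qBinomial_sub {m k : ℕ} (h : k ≤ m) : qBinomial x m (m - k) = qBinomial x m k := by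
  simp [qBinomial, h, Nat.sub_sub_self h, mul_comm]

lemma qBinomial_succ_succ (hx : ‖x‖ < 1) {m k : ℕ} (hk : k ≤ m) :
    qBinomial x (m + 1) (k + 1) = qBinomial x m (k + 1) + x ^ (m - k) * qBinomial x m k := by
  obtain ⟨j, rfl⟩ := Nat.exists_eq_add_of_le hk
  rcases j with _ | j
  · simp [qBinomial_self hx, qBinomial_of_lt]
  have e₁ : k + (j + 1) - (k + 1) = j := by omega
  have e₂ : k + (j + 1) + 1 - (k + 1) = j + 1 := by omega
  simp only [qBinomial, e₁, e₂, Nat.add_sub_cancel_left, if_pos (by omega : k + 1 ≤ k + (j + 1)),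
    if_pos (by omega : k ≤ k + (j + 1)), if_pos (by omega : k + 1 ≤ k + (j + 1) + 1),
    qPochhammer_succ]
  have := qPochhammer_ne_zero hx
  have := one_sub_pow_ne_zero hx (n := j + 1) (by omega)
  have := one_sub_pow_ne_zero hx (n := k + 1) (by omega)
  field_simp
  ring

theorem prod_one_add_mul_pow_eq_sum_qBinomial (hx : ‖x‖ < 1) (m : ℕ) (t : ℂ) :
    ∏ i ∈ range m, (1 + t * x ^ i) =
      ∑ k ∈ range (m + 1), qBinomial x m k * x ^ k.choose 2 * t ^ k := by
  induction m with
  | zero => simp [qBinomial_zero_right hx]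
  | succ m ih =>
    have hlow : ∑ k ∈ range (m + 1), qBinomial x m (k + 1) * x ^ (k + 1).choose 2 * t ^ (k + 1)
        + 1 = ∑ k ∈ range (m + 1), qBinomial x m k * x ^ k.choose 2 * t ^ k := by
      have h0 : (1 : ℂ) = qBinomial x m 0 * x ^ (0 : ℕ).choose 2 * t ^ 0 := by
        simp [qBinomial_zero_right hx]
      rw [h0, ← sum_range_succ' (fun k => qBinomial x m k * x ^ k.choose 2 * t ^ k),
        sum_range_succ, qBinomial_of_lt (Nat.lt_succ_self m), zero_mul, zero_mul, add_zero]
    have hhigh : ∑ k ∈ range (m + 1), x ^ (m - k) * qBinomial x m k * x ^ (k + 1).choose 2 *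
        t ^ (k + 1) = (∑ k ∈ range (m + 1), qBinomial x m k * x ^ k.choose 2 * t ^ k) *
          (t * x ^ m) := by
      rw [sum_mul]
      refine sum_congr rfl fun k hk => ?_
      have hkm : x ^ (m - k) * x ^ (k + 1).choose 2 = x ^ k.choose 2 * x ^ m := by
        rw [← pow_add, ← pow_add, Nat.choose_two_succ]
        have := mem_range.1 hk
        congr 1
        omega
      linear_combination (qBinomial x m k * t ^ (k + 1)) * hkm
    have hpascal : ∑ k ∈ range (m + 1), qBinomial x (m + 1) (k + 1) * x ^ (k + 1).choose 2 *
        t ^ (k + 1) = ∑ k ∈ range (m + 1), qBinomial x m (k + 1) * x ^ (k + 1).choose 2 *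
          t ^ (k + 1) + ∑ k ∈ range (m + 1), x ^ (m - k) * qBinomial x m k *
            x ^ (k + 1).choose 2 * t ^ (k + 1) := by
      rw [← sum_add_distrib]
      refine sum_congr rfl fun k hk => ?_
      rw [qBinomial_succ_succ hx (Nat.le_of_lt_succ (mem_range.1 hk))]
      ring
    rw [prod_range_succ, ih, sum_range_succ' _ (m + 1), hpascal, hhigh, ← hlow,
      qBinomial_zero_right hx, Nat.choose_zero_succ, pow_zero]
    ring

lemma tendsto_qPochhammer (hx : ‖x‖ < 1) : Tendsto (qPochhammer x) atTop (𝓝 (eulerPhi x)) :=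
  (multipliable_one_sub_pow_of_le hx (by simp)).hasProd.tendsto_prod_nat

lemma exists_norm_qBinomial_le (hx : ‖x‖ < 1) : ∃ C, ∀ m k, ‖qBinomial x m k‖ ≤ C := by
  have hlim := tendsto_qPochhammer hx
  obtain ⟨B, hB⟩ := hlim.norm.bddAbove_range
  obtain ⟨B', hB'⟩ := (hlim.inv₀ (eulerPhi_ne_zero hx)).norm.bddAbove_range
  have hB₀ : 0 ≤ B := (norm_nonneg _).trans (hB ⟨0, rfl⟩)
  have hB'₀ : 0 ≤ B' := (norm_nonneg _).trans (hB' ⟨0, rfl⟩)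
  refine ⟨B * (B' * B'), fun m k => ?_⟩
  unfold qBinomial
  split_ifs
  · rw [div_eq_mul_inv, mul_inv, norm_mul, norm_mul]
    exact mul_le_mul (hB ⟨m, rfl⟩) (mul_le_mul (hB' ⟨k, rfl⟩) (hB' ⟨m - k, rfl⟩)
      (norm_nonneg _) hB'₀) (by positivity) hB₀
  · simpa using by positivity

lemma tendsto_qBinomial_add (hx : ‖x‖ < 1) {k l : ℕ → ℕ} (hk : Tendsto k atTop atTop)
    (hl : Tendsto l atTop atTop) :
    Tendsto (fun N => qBinomial x (k N + l N) (k N)) atTop (𝓝 (eulerPhi x)⁻¹) := by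
  have hlim := tendsto_qPochhammer hx
  have hφ := eulerPhi_ne_zero hx
  simp only [qBinomial_add]
  have := (hlim.comp (tendsto_atTop_mono (fun N => Nat.le_add_left (l N) (k N)) hl)).div
    ((hlim.comp hk).mul (hlim.comp hl)) (mul_ne_zero hφ hφ)
  rwa [div_mul_cancel_left₀ hφ] at this

end

/-- `jacobiExp N k = j (j + 1) / 2` for the integer `j = k - (N + 1)`. -/
def jacobiExp (N k : ℕ) : ℕ := if N < k then (k - N).choose 2 else (N + 1 - k).choose 2

lemma succ_choose_two_add_choose_two (N k : ℕ) :
    (N + 1).choose 2 + k.choose 2 = jacobiExp N k + N * k := by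
  unfold jacobiExp
  split_ifs with h
  · obtain ⟨j, rfl⟩ := Nat.exists_eq_add_of_lt h
    rw [show N + j + 1 - N = j + 1 by omega]
    apply Nat.cast_injective (R := ℚ)
    push_cast [Nat.cast_choose_two]
    ring
  · obtain ⟨j, rfl⟩ := Nat.exists_eq_add_of_le (not_lt.1 h)
    rw [show k + j + 1 - k = j + 1 by omega]
    apply Nat.cast_injective (R := ℚ)
    push_cast [Nat.cast_choose_two]
    ring

noncomputable def jacobiCoeff (x : ℂ) (N k : ℕ) : ℂ :=
  (-1) ^ (N + 1 + k) * qBinomial x (2 * N + 2) k * x ^ jacobiExp N k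

section
variable {x : ℂ}

theorem prod_mul_prod_eq_sum_jacobiCoeff (hx : ‖x‖ < 1) (hx₀ : x ≠ 0) (N : ℕ) (z : ℂ) :
    (∏ i ∈ range (N + 1), (1 - x ^ (i + 1) * z)) * ∏ i ∈ range (N + 1), (z - x ^ i) =
      ∑ k ∈ range (2 * N + 3), jacobiCoeff x N k * z ^ k := by
  obtain ⟨t, ht⟩ : ∃ t, t = -z / x ^ N := ⟨_, rfl⟩
  have htz : t * x ^ N = -z := by rw [ht]; field_simp
  have hfirst : ∏ i ∈ range (N + 1), (1 - x ^ (i + 1) * z) =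
      ∏ i ∈ range (N + 1), (1 + t * x ^ (N + 1 + i)) := by
    refine prod_congr rfl fun i _ => ?_
    rw [show N + 1 + i = N + (i + 1) by ring, pow_add]
    linear_combination -x ^ (i + 1) * htz
  have hsecond : ∏ i ∈ range (N + 1), (z - x ^ i) =
      (-1) ^ (N + 1) * x ^ (N + 1).choose 2 * ∏ i ∈ range (N + 1), (1 + t * x ^ i) := by
    have hfactor : ∀ i ∈ range (N + 1), z - x ^ i = -x ^ i * (1 + t * x ^ (N + 1 - 1 - i)) := by
      intro i hi
      have hiN : x ^ i * x ^ (N + 1 - 1 - i) = x ^ N := by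
        rw [← pow_add]; congr 1; have := mem_range.1 hi; omega
      linear_combination htz + t * hiN
    rw [prod_congr rfl hfactor, prod_mul_distrib, prod_range_reflect (fun i => 1 + t * x ^ i),
      prod_neg, prod_pow_eq_pow_sum, sum_range_id, Nat.choose_two_right, card_range]
  rw [hfirst, hsecond, mul_left_comm, mul_comm (∏ i ∈ range (N + 1), _), ← prod_range_add,
    show N + 1 + (N + 1) = 2 * N + 2 by ring, prod_one_add_mul_pow_eq_sum_qBinomial hx, mul_sum]
  refine sum_congr rfl fun k _ => ?_
  have hexp : x ^ (N + 1).choose 2 * x ^ k.choose 2 = x ^ jacobiExp N k * (x ^ N) ^ k := by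
    rw [← pow_add, ← pow_mul, ← pow_add, succ_choose_two_add_choose_two]
  have htk : t ^ k * (x ^ N) ^ k = (-1) ^ k * z ^ k := by rw [← mul_pow, htz, neg_pow]
  rw [jacobiCoeff]
  linear_combination ((-1) ^ (N + 1) * qBinomial x (2 * N + 2) k * t ^ k) * hexp +
    ((-1) ^ (N + 1) * qBinomial x (2 * N + 2) k * x ^ jacobiExp N k) * htk

lemma apply_one_eq_sum_mul_of_forall_eq_sub_one_mul {G : ℂ → ℂ} (hG : Continuous G) {c : ℕ → ℂ}
    {n : ℕ} (h : ∀ z, ∑ k ∈ range n, c k * z ^ k = (z - 1) * G z) :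
    G 1 = ∑ k ∈ range n, c k * k := by
  have hsum : ∑ k ∈ range n, c k = 0 := by simpa using h 1
  have hG' : ∀ z ∈ ({1}ᶜ : Set ℂ), G z = ∑ k ∈ range n, c k * ∑ i ∈ range k, z ^ i := by
    intro z hz
    refine mul_left_cancel₀ (sub_ne_zero.2 hz) ?_
    rw [← h z, mul_sum, ← sub_zero (∑ k ∈ range n, c k * z ^ k), ← hsum, ← sum_sub_distrib]
    refine sum_congr rfl fun k _ => ?_
    linear_combination -c k * geom_sum_mul z k
  have := Continuous.ext_on (dense_compl_singleton 1) hG (by fun_prop) hG'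
  simpa using congrFun this 1

lemma sum_jacobiCoeff_eq_zero (hx : ‖x‖ < 1) (hx₀ : x ≠ 0) (N : ℕ) :
    ∑ k ∈ range (2 * N + 3), jacobiCoeff x N k = 0 := by
  simpa [prod_range_succ'] using (prod_mul_prod_eq_sum_jacobiCoeff hx hx₀ N 1).symm

lemma qPochhammer_succ_mul_qPochhammer_eq_sum (hx : ‖x‖ < 1) (hx₀ : x ≠ 0) (N : ℕ) :
    qPochhammer x (N + 1) * qPochhammer x N = ∑ k ∈ range (2 * N + 3), jacobiCoeff x N k * k := by
  set G : ℂ → ℂ := fun z =>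
    (∏ i ∈ range (N + 1), (1 - x ^ (i + 1) * z)) * ∏ i ∈ range N, (z - x ^ (i + 1))
  calc qPochhammer x (N + 1) * qPochhammer x N = G 1 := by simp [G, qPochhammer]
    _ = _ := apply_one_eq_sum_mul_of_forall_eq_sub_one_mul (by fun_prop) fun z => by
      rw [← prod_mul_prod_eq_sum_jacobiCoeff hx hx₀, prod_range_succ' (fun i => z - x ^ i)]
      ring

lemma jacobiCoeff_sub {N n : ℕ} (hn : n ≤ N) :
    jacobiCoeff x N (N - n) =
      -((-1) ^ n * qBinomial x (2 * N + 2) (N - n) * x ^ (n + 1).choose 2) := by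
  have hexp : jacobiExp N (N - n) = (n + 1).choose 2 := by
    rw [jacobiExp, if_neg (by omega), show N + 1 - (N - n) = n + 1 by omega]
  rw [jacobiCoeff, hexp, show N + 1 + (N - n) = 2 * (N - n) + n + 1 by omega, pow_succ, pow_add,
    pow_mul]
  ring

lemma jacobiCoeff_add {N n : ℕ} (hn : n ≤ N) :
    jacobiCoeff x N (N + 2 + n) =
      -((-1) ^ n * qBinomial x (2 * N + 2) (N - n) * x ^ (n + 2).choose 2) := by
  have hexp : jacobiExp N (N + 2 + n) = (n + 2).choose 2 := by
    rw [jacobiExp, if_pos (by omega), show N + 2 + n - N = n + 2 by omega]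
  rw [jacobiCoeff, hexp, ← qBinomial_sub (by omega : N - n ≤ 2 * N + 2),
    show 2 * N + 2 - (N - n) = N + 2 + n by omega,
    show N + 1 + (N + 2 + n) = 2 * (N + 1) + n + 1 by omega, pow_succ, pow_add, pow_mul]
  ring

lemma sum_jacobiCoeff_mul_eq (hx : ‖x‖ < 1) (hx₀ : x ≠ 0) (N : ℕ) :
    ∑ k ∈ range (2 * N + 3), jacobiCoeff x N k * k = ∑ n ∈ range (N + 1),
      (-1) ^ n * (n + 1) * x ^ (n + 1).choose 2 * (1 - x ^ (n + 1)) *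
        qBinomial x (2 * N + 2) (N - n) := by
  calc ∑ k ∈ range (2 * N + 3), jacobiCoeff x N k * k
      = ∑ k ∈ range (2 * N + 3), jacobiCoeff x N k * ((k : ℂ) - (N + 1)) := by
        simp only [mul_sub, sum_sub_distrib, ← sum_mul, sum_jacobiCoeff_eq_zero hx hx₀, zero_mul,
          sub_zero]
    _ = ∑ n ∈ range (N + 1), (jacobiCoeff x N (N - n) * (((N - n : ℕ) : ℂ) - (N + 1)) +
          jacobiCoeff x N (N + 2 + n) * (((N + 2 + n : ℕ) : ℂ) - (N + 1))) := by
        set f : ℕ → ℂ := fun k => jacobiCoeff x N k * ((k : ℂ) - (N + 1))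
        rw [show 2 * N + 3 = (N + 1) + (N + 1 + 1) by ring, sum_range_add,
          sum_range_succ' (fun k => f (N + 1 + k)), ← sum_range_reflect f (N + 1),
          sum_add_distrib]
        have hidx : ∀ n, N + 1 + (n + 1) = N + 2 + n := fun n => by ring
        simp only [f, Nat.add_sub_cancel, add_zero, hidx, Nat.cast_add_one, sub_self, mul_zero]
    _ = _ := by
        refine sum_congr rfl fun n hn => ?_
        have hn : n ≤ N := Nat.le_of_lt_succ (mem_range.1 hn)
        rw [jacobiCoeff_sub hn, jacobiCoeff_add hn, Nat.cast_sub hn,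
          show n + 2 = n + 1 + 1 by rfl, Nat.choose_two_succ (n + 1)]
        push_cast
        ring

lemma norm_neg_one_pow_mul_mul_pow_choose_two_le (hx : ‖x‖ ≤ 1) (n : ℕ) (c : ℂ) :
    ‖(-1) ^ n * c * x ^ (n + 1).choose 2‖ ≤ ‖c‖ * ‖x‖ ^ n := by
  simp only [norm_mul, norm_pow, norm_neg, norm_one, one_pow, one_mul]
  exact mul_le_mul_of_nonneg_left
    (pow_le_pow_of_le_one (norm_nonneg _) hx (Nat.le_choose_two_succ n)) (norm_nonneg c)

lemma summable_neg_one_pow_mul_mul_pow_choose_two (hx : ‖x‖ < 1) {c : ℕ → ℂ}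
    (hc : ∀ n, ‖c n‖ ≤ n + 1) : Summable fun n => (-1) ^ n * c n * x ^ (n + 1).choose 2 :=
  .of_norm_bounded (summable_succ_mul_pow (norm_nonneg x) hx) fun n =>
    (norm_neg_one_pow_mul_mul_pow_choose_two_le hx.le n (c n)).trans (by gcongr; exact hc n)

lemma norm_neg_one_pow_mul_one_sub_pow_le (hx : ‖x‖ ≤ 1) (n : ℕ) :
    ‖(-1) ^ n * (n + 1) * x ^ (n + 1).choose 2 * (1 - x ^ (n + 1))‖ ≤
      2 * ((n + 1) * ‖x‖ ^ n) := by
  have h₁ : ‖(n : ℂ) + 1‖ = n + 1 := by exact_mod_cast Complex.norm_natCast (n + 1)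
  have h₂ : ‖1 - x ^ (n + 1)‖ ≤ 2 := (norm_sub_le _ _).trans (by
    rw [norm_one, norm_pow]; linarith [pow_le_one₀ (norm_nonneg x) hx (n := n + 1)])
  rw [norm_mul, mul_comm 2]
  refine mul_le_mul ?_ h₂ (norm_nonneg _) (by positivity)
  simpa only [h₁] using norm_neg_one_pow_mul_mul_pow_choose_two_le hx n ((n : ℂ) + 1)

lemma eulerPhi_sq_eq_tsum_div (hx : ‖x‖ < 1) (hx₀ : x ≠ 0) :
    eulerPhi x ^ 2 =
      (∑' n : ℕ, (-1) ^ n * (n + 1) * x ^ (n + 1).choose 2 * (1 - x ^ (n + 1))) / eulerPhi x := by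
  obtain ⟨C, hC⟩ := exists_norm_qBinomial_le hx
  have hC₀ : 0 ≤ C := (norm_nonneg _).trans (hC 0 0)
  set b : ℕ → ℂ := fun n => (-1) ^ n * (n + 1) * x ^ (n + 1).choose 2 * (1 - x ^ (n + 1))
  have hb : ∀ n, ‖b n‖ ≤ 2 * ((n + 1) * ‖x‖ ^ n) := norm_neg_one_pow_mul_one_sub_pow_le hx.le
  set f : ℕ → ℕ → ℂ := fun N n => if n ≤ N then b n * qBinomial x (2 * N + 2) (N - n) else 0
  have hf : ∀ N, ∑' n, f N n = qPochhammer x (N + 1) * qPochhammer x N := fun N => by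
    rw [qPochhammer_succ_mul_qPochhammer_eq_sum hx hx₀, sum_jacobiCoeff_mul_eq hx hx₀,
      tsum_eq_sum (s := range (N + 1)) fun n hn => if_neg (by simpa [Nat.lt_succ_iff] using hn)]
    exact sum_congr rfl fun n hn => if_pos (Nat.le_of_lt_succ (mem_range.1 hn))
  have hpointwise : ∀ n, Tendsto (f · n) atTop (𝓝 (b n * (eulerPhi x)⁻¹)) := fun n => by
    have hq := tendsto_qBinomial_add hx (tendsto_sub_atTop_nat n)
      (tendsto_atTop_mono (fun N => show N ≤ N + 2 + n by omega) tendsto_id)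
    refine (tendsto_const_nhds.mul hq).congr' ?_
    filter_upwards [eventually_ge_atTop n] with N hN
    simp only [f, if_pos hN, show N - n + (N + 2 + n) = 2 * N + 2 by omega]
  have hbound : ∀ N n, ‖f N n‖ ≤ C * (2 * ((n + 1) * ‖x‖ ^ n)) := fun N n => by
    simp only [f]
    split_ifs
    · rw [norm_mul, mul_comm C]
      exact mul_le_mul (hb n) (hC _ _) (norm_nonneg _) (by positivity)
    · simpa using by positivity
  have hlim := tendsto_tsum_of_dominated_convergence
    (((summable_succ_mul_pow (norm_nonneg x) hx).mul_left 2).mul_left C) hpointwise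
    (Eventually.of_forall hbound)
  simp only [hf] at hlim
  rw [sq, tendsto_nhds_unique (((tendsto_qPochhammer hx).comp (tendsto_add_atTop_nat 1)).mul
    (tendsto_qPochhammer hx)) hlim, tsum_mul_right, div_eq_mul_inv]

lemma tsum_neg_one_pow_mul_one_sub_pow (hx : ‖x‖ < 1) :
    ∑' n : ℕ, (-1) ^ n * (n + 1) * x ^ (n + 1).choose 2 * (1 - x ^ (n + 1)) =
      ∑' n : ℕ, (-1) ^ n * (2 * n + 1) * x ^ (n + 1).choose 2 := by
  set a : ℕ → ℂ := fun n => (-1) ^ n * (n + 1) * x ^ (n + 1).choose 2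
  set g : ℕ → ℂ := fun n => (-1) ^ n * n * x ^ (n + 1).choose 2
  have ha : Summable a := summable_neg_one_pow_mul_mul_pow_choose_two hx fun n => by
    exact_mod_cast (Complex.norm_natCast (n + 1)).le
  have hg : Summable g := summable_neg_one_pow_mul_mul_pow_choose_two hx fun n => by
    simp
  calc ∑' n : ℕ, (-1) ^ n * (n + 1) * x ^ (n + 1).choose 2 * (1 - x ^ (n + 1))
      = ∑' n, (a n + g (n + 1)) := tsum_congr fun n => by
        simp only [a, g, Nat.choose_two_succ (n + 1), pow_add, pow_succ]
        push_cast
        ring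
    _ = ∑' n, a n + ∑' n, g n := by
        rw [ha.tsum_add ((summable_nat_add_iff 1).2 hg), hg.tsum_eq_zero_add]
        simp [g]
    _ = _ := by
        rw [← ha.tsum_add hg]
        exact tsum_congr fun n => by ring

theorem eulerPhi_pow_three (hx : ‖x‖ < 1) :
    eulerPhi x ^ 3 = ∑' n : ℕ, (-1) ^ n * (2 * n + 1) * x ^ (n + 1).choose 2 := by
  rcases eq_or_ne x 0 with rfl | hx₀
  · rw [tsum_eq_single 0 fun n hn => by simp [Nat.choose_eq_zero_iff, hn]]
    simp [eulerPhi]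
  · rw [pow_succ, eulerPhi_sq_eq_tsum_div hx hx₀, tsum_neg_one_pow_mul_one_sub_pow hx,
      div_mul_cancel₀ _ (eulerPhi_ne_zero hx)]

end

lemma kronNegTwo_two_mul (k : ℕ) : kronNegTwo (2 * k) = 0 := by
  simp only [kronNegTwo]
  split_ifs <;> omega

lemma kronNegTwo_two_mul_add_one :
    ∀ k : ℕ, kronNegTwo (2 * k + 1) = (-1) ^ k * (-1) ^ (k + 1).choose 2
  | 0 | 1 | 2 | 3 => by decide
  | k + 4 => by
    have hmod : kronNegTwo (2 * (k + 4) + 1) = kronNegTwo (2 * k + 1) := by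
      simp only [kronNegTwo, show (2 * (k + 4) + 1) % 8 = (2 * k + 1) % 8 by omega]
    have hchoose : (k + 4 + 1).choose 2 = (k + 1).choose 2 + 2 * (2 * k + 5) := by
      simp only [Nat.choose_two_succ]; ring
    rw [hmod, kronNegTwo_two_mul_add_one k, hchoose, pow_add, pow_add, pow_mul]
    norm_num

lemma dedekindEta_nat_mul (n : ℕ) (τ : ℂ) :
    dedekindEta (n * τ) =
      cexp (2 * Real.pi * I * τ / 24) ^ n * eulerPhi (cexp (2 * Real.pi * I * τ) ^ n) := by
  have h₁ : 2 * Real.pi * I * (n * τ) / 24 = n * (2 * Real.pi * I * τ / 24) := by ring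
  have h₂ : 2 * Real.pi * I * (n * τ) = n * (2 * Real.pi * I * τ) := by ring
  rw [dedekindEta, h₁, h₂, eulerPhi, Complex.exp_nat_mul, Complex.exp_nat_mul]

lemma tsum_kronNegTwo_mul_cexp (τ : ℂ) :
    ∑' n : ℕ, (kronNegTwo n : ℂ) * n * cexp (2 * Real.pi * I * n ^ 2 * τ / 8) =
      cexp (2 * Real.pi * I * τ / 8) * ∑' k : ℕ,
        (-1) ^ k * (2 * k + 1) * (-cexp (2 * Real.pi * I * τ)) ^ (k + 1).choose 2 := by
  have hsupp : Function.support (fun n : ℕ =>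
      (kronNegTwo n : ℂ) * n * cexp (2 * Real.pi * I * n ^ 2 * τ / 8)) ⊆
      Set.range (fun k => 2 * k + 1) := fun n hn => by
    obtain ⟨k, rfl | rfl⟩ := Nat.even_or_odd' n
    · simp [kronNegTwo_two_mul] at hn
    · exact ⟨k, rfl⟩
  have hinj : Function.Injective fun k : ℕ => 2 * k + 1 := fun a b h => by simp_all
  rw [← hinj.tsum_eq hsupp, ← tsum_mul_left]
  refine tsum_congr fun k => ?_
  have hsq : ((2 * k + 1 : ℕ) : ℂ) ^ 2 = 8 * (k + 1).choose 2 + 1 := by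
    push_cast [Nat.cast_choose_two]
    ring
  have hexp : cexp (2 * Real.pi * I * (8 * (k + 1).choose 2 + 1) * τ / 8) =
      cexp (2 * Real.pi * I * τ / 8) * cexp (2 * Real.pi * I * τ) ^ (k + 1).choose 2 := by
    rw [← Complex.exp_nat_mul, ← Complex.exp_add]
    ring_nf
  rw [kronNegTwo_two_mul_add_one, hsq, hexp, neg_pow (cexp _)]
  push_cast
  ring

theorem eta_quotient_theta_series (τ : ℂ) (hτ : 0 < τ.im) :
    dedekindEta (2*τ) ^ 9 / (dedekindEta τ ^ 3 * dedekindEta (4*τ) ^ 3) =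
      ∑' n : ℕ, (kronNegTwo n : ℂ) * (n : ℂ) *
        Complex.exp (2 * Real.pi * I * (n : ℂ)^2 * τ / 8) := by
  set w := cexp (2 * Real.pi * I * τ / 24)
  set q := cexp (2 * Real.pi * I * τ)
  have hq : ‖q‖ < 1 := UpperHalfPlane.norm_exp_two_pi_I_lt_one ⟨τ, hτ⟩
  have hq4 : ‖q ^ 4‖ < 1 := by rw [norm_pow]; exact pow_lt_one₀ (norm_nonneg q) hq (by norm_num)
  have h₁ : dedekindEta τ = w * eulerPhi q := by simpa using dedekindEta_nat_mul 1 τ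
  have h₂ : dedekindEta (2 * τ) = w ^ 2 * eulerPhi (q ^ 2) := by
    simpa using dedekindEta_nat_mul 2 τ
  have h₄ : dedekindEta (4 * τ) = w ^ 4 * eulerPhi (q ^ 4) := by
    simpa using dedekindEta_nat_mul 4 τ
  have h₈ : cexp (2 * Real.pi * I * τ / 8) = w ^ 3 := by rw [← Complex.exp_nat_mul]; ring_nf
  rw [h₁, h₂, h₄, tsum_kronNegTwo_mul_cexp, h₈, ← eulerPhi_pow_three (by rwa [norm_neg]),
    div_eq_iff (by simp [eulerPhi_ne_zero hq, eulerPhi_ne_zero hq4, w])]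
  rw [show (w ^ 2 * eulerPhi (q ^ 2)) ^ 9 = w ^ 18 * (eulerPhi (q ^ 2) ^ 3) ^ 3 by ring,
    eulerPhi_sq_pow_three hq]
  ring
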